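/- arXiv:2512.23854 — 2 statements merged into one kernel-verified Lean document; each statement's English description precedes it below -/
import Mathlib

section
/- Under the model $E[Y\mid D=d,W,P] = \mu_d + W'\tau_d + (\rho_d + W'\eta_d)\lambda_d(P)$ for $d = 0,1$, suppose conditional on each $D = d$: $\mathrm{Cov}(W, \lambda_d(P)) = 0$, $\mathrm{Cov}(WW', \lambda_d(P)) = 0$, and $\mathrm{Cov}(W, \lambda_d(P)^2) = 0$. Then the misspecified-regression slope estimands satisfy $\tilde\rho_d = \rho_d + E[W'\eta_d \mid D=d]$, and consequently the bias of the estimated MTE slope is $(\tilde\rho_1 - \tilde\rho_0) - (\rho_1 - \rho_0 + E[W'(\eta_1 - \eta_0)]) = (E[W\mid D=1] - E[W\mid D=0])'\,(P(D=0)\,\eta_1 + P(D=1)\,\eta_0)$. -/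
open MeasureTheory ProbabilityTheory

/-- When additive separability fails (`Y = μ_d + W'τ_d + (ρ_d + W'η_d)λ_d(P) + ε` within
treatment arm `D = d`) but `W` is uncorrelated with `λ_d(P)` up to second moments within
each arm, the misspecified-regression slope estimands satisfy
`ρ̃_d = ρ_d + E[W'η_d ∣ D=d]`, and the bias of the estimated MTE slope equals
`(E[W∣D=1] - E[W∣D=0])'(P(D=0) η_1 + P(D=1) η_0)`. -/
theorem additive_separability_slope_bias {Ω : Type*} [MeasurableSpace Ω]
    (μpr : Measure Ω) [IsProbabilityMeasure μpr] (L : ℕ)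
    (D : Ω → Bool) (hD : Measurable D)
    (hpos : ∀ d : Bool, 0 < μpr {ω | D ω = d})
    (W : Ω → Fin L → ℝ) (Y : Ω → ℝ) (lam : Bool → Ω → ℝ)
    (μc ρc : Bool → ℝ) (τc ηc : Bool → Fin L → ℝ)
    (μt ρt : Bool → ℝ) (τt : Bool → Fin L → ℝ)
    (ν : Bool → Measure Ω) (hν : ∀ d, ν d = μpr[|{ω | D ω = d}])
    (eps : Bool → Ω → ℝ)
    (heps : ∀ d ω, eps d ω =
      Y ω - (μc d + (∑ i, W ω i * τc d i) + (ρc d + ∑ i, W ω i * ηc d i) * lam d ω))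
    -- structural error orthogonal to the regressors within each arm
    (ho1 : ∀ d, (∫ ω, eps d ω ∂ν d) = 0)
    (ho2 : ∀ d i, (∫ ω, eps d ω * W ω i ∂ν d) = 0)
    (ho3 : ∀ d, (∫ ω, eps d ω * lam d ω ∂ν d) = 0)
    (ho4 : ∀ d i, (∫ ω, eps d ω * W ω i * lam d ω ∂ν d) = 0)
    -- normal equations of the (misspecified) population OLS of Y on (1, W, λ_d) in arm d
    (hn1 : ∀ d, (∫ ω, (Y ω - (μt d + (∑ i, W ω i * τt d i) + ρt d * lam d ω)) ∂ν d) = 0)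
    (hn2 : ∀ d i,
      (∫ ω, (Y ω - (μt d + (∑ i, W ω i * τt d i) + ρt d * lam d ω)) * W ω i ∂ν d) = 0)
    (hn3 : ∀ d,
      (∫ ω, (Y ω - (μt d + (∑ i, W ω i * τt d i) + ρt d * lam d ω)) * lam d ω ∂ν d) = 0)
    -- W uncorrelated with λ_d(P) up to second moments within each arm
    (hc1 : ∀ d i, (∫ ω, W ω i * lam d ω ∂ν d) -
      (∫ ω, W ω i ∂ν d) * ∫ ω, lam d ω ∂ν d = 0)
    (hc2 : ∀ d i j, (∫ ω, W ω i * W ω j * lam d ω ∂ν d) -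
      (∫ ω, W ω i * W ω j ∂ν d) * ∫ ω, lam d ω ∂ν d = 0)
    (hc3 : ∀ d i, (∫ ω, W ω i * lam d ω ^ 2 ∂ν d) -
      (∫ ω, W ω i ∂ν d) * ∫ ω, lam d ω ^ 2 ∂ν d = 0)
    -- existence of the relevant moments
    (hIW : ∀ i, Integrable (fun ω => W ω i) μpr)
    (hIWd : ∀ d i, Integrable (fun ω => W ω i) (ν d))
    (hIl : ∀ d, Integrable (lam d) (ν d))
    (hIWW : ∀ d i j, Integrable (fun ω => W ω i * W ω j) (ν d))
    (hIWl : ∀ d i, Integrable (fun ω => W ω i * lam d ω) (ν d))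
    (hIl2 : ∀ d, Integrable (fun ω => lam d ω ^ 2) (ν d))
    (hIWl2 : ∀ d i, Integrable (fun ω => W ω i * lam d ω ^ 2) (ν d))
    (hIWWl : ∀ d i j, Integrable (fun ω => W ω i * W ω j * lam d ω) (ν d))
    (hIe : ∀ d, Integrable (eps d) (ν d))
    (hIeW : ∀ d i, Integrable (fun ω => eps d ω * W ω i) (ν d))
    (hIel : ∀ d, Integrable (fun ω => eps d ω * lam d ω) (ν d))
    (hIeWl : ∀ d i, Integrable (fun ω => eps d ω * W ω i * lam d ω) (ν d))
    -- non-collinearity of the regressors within each arm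
    (G : Bool → Matrix (Fin (L + 1)) (Fin (L + 1)) ℝ)
    (hG : ∀ d, G d = Matrix.of fun i j =>
      ∫ ω, (Fin.cons 1 (W ω) : Fin (L + 1) → ℝ) i * (Fin.cons 1 (W ω) : Fin (L + 1) → ℝ) j ∂ν d)
    (hGinv : ∀ d, IsUnit (G d).det)
    (hVar : ∀ d, (∫ ω, lam d ω ^ 2 ∂ν d) - (∫ ω, lam d ω ∂ν d) ^ 2 ≠ 0) :
    (∀ d, ρt d = ρc d + ∫ ω, (∑ i, W ω i * ηc d i) ∂ν d) ∧
      (ρt true - ρt false) -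
          (ρc true - ρc false + ∫ ω, (∑ i, W ω i * (ηc true i - ηc false i)) ∂μpr) =
        ∑ i, ((∫ ω, W ω i ∂ν true) - ∫ ω, W ω i ∂ν false) *
          ((μpr {ω | D ω = false}).toReal * ηc true i +
            (μpr {ω | D ω = true}).toReal * ηc false i) := by
  classical
  have hprob : ∀ d, IsProbabilityMeasure (ν d) := by
    intro d
    rw [hν]
    exact cond_isProbabilityMeasure (hpos d).ne'
  -- Part 1
  have key : ∀ d, ρt d = ρc d + ∫ ω, (∑ i, W ω i * ηc d i) ∂ν d := by
    intro d
    haveI := hprob d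
    set m := ∫ ω, lam d ω ∂ν d with hm
    set sq := ∫ ω, lam d ω ^ 2 ∂ν d with hsq
    set E : Fin L → ℝ := fun i => ∫ ω, W ω i ∂ν d with hE
    set A := μc d - μt d with hA
    set B : Fin L → ℝ := fun i => τc d i - τt d i with hB
    set C := ρc d - ρt d with hC
    have hc1' : ∀ i, (∫ ω, W ω i * lam d ω ∂ν d) = E i * m := by
      intro i; have := hc1 d i; simp only [hE]; linarith
    have hc3' : ∀ i, (∫ ω, W ω i * lam d ω ^ 2 ∂ν d) = E i * sq := by
      intro i; have := hc3 d i; simp only [hE]; linarith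
    -- pointwise decomposition of the regression residual
    have pt : ∀ ω, Y ω - (μt d + (∑ i, W ω i * τt d i) + ρt d * lam d ω)
        = eps d ω + A + (∑ i, W ω i * B i) + C * lam d ω
          + ∑ i, ηc d i * (W ω i * lam d ω) := by
      intro ω
      have h1 : ∑ i, W ω i * B i
          = (∑ i, W ω i * τc d i) - ∑ i, W ω i * τt d i := by
        rw [← Finset.sum_sub_distrib]
        exact Finset.sum_congr rfl fun i _ => by simp [hB]; ring
      have h2 : ∑ i, ηc d i * (W ω i * lam d ω)
          = (∑ i, W ω i * ηc d i) * lam d ω := by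
        rw [Finset.sum_mul]
        exact Finset.sum_congr rfl fun i _ => by ring
      rw [h1, h2, heps d ω, hA, hC]
      ring
    have pt3 : ∀ ω, (Y ω - (μt d + (∑ i, W ω i * τt d i) + ρt d * lam d ω)) * lam d ω
        = eps d ω * lam d ω + A * lam d ω + (∑ i, B i * (W ω i * lam d ω))
          + C * lam d ω ^ 2 + ∑ i, ηc d i * (W ω i * lam d ω ^ 2) := by
      intro ω
      rw [pt ω]
      have h1 : (∑ i, W ω i * B i) * lam d ω = ∑ i, B i * (W ω i * lam d ω) := by
        rw [Finset.sum_mul]; exact Finset.sum_congr rfl fun i _ => by ring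
      have h2 : (∑ i, ηc d i * (W ω i * lam d ω)) * lam d ω
          = ∑ i, ηc d i * (W ω i * lam d ω ^ 2) := by
        rw [Finset.sum_mul]; exact Finset.sum_congr rfl fun i _ => by ring
      rw [← h1, ← h2]; ring
    -- integrability
    have hSint : Integrable (fun ω => ∑ i, W ω i * B i) (ν d) :=
      integrable_finset_sum _ fun i _ => (hIWd d i).mul_const _
    have hTint : Integrable (fun ω => ∑ i, ηc d i * (W ω i * lam d ω)) (ν d) :=
      integrable_finset_sum _ fun i _ => (hIWl d i).const_mul _
    have hS3int : Integrable (fun ω => ∑ i, B i * (W ω i * lam d ω)) (ν d) :=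
      integrable_finset_sum _ fun i _ => (hIWl d i).const_mul _
    have hT3int : Integrable (fun ω => ∑ i, ηc d i * (W ω i * lam d ω ^ 2)) (ν d) :=
      integrable_finset_sum _ fun i _ => (hIWl2 d i).const_mul _
    -- equation from orthogonality to the constant
    have e1 : A + (∑ i, E i * B i) + C * m + (∑ i, ηc d i * E i) * m = 0 := by
      have h := hn1 d
      rw [show (fun ω => Y ω - (μt d + (∑ i, W ω i * τt d i) + ρt d * lam d ω))
          = fun ω => eps d ω + A + (∑ i, W ω i * B i) + C * lam d ω
            + ∑ i, ηc d i * (W ω i * lam d ω) from funext pt] at h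
      have i1 : Integrable (fun ω => eps d ω + A) (ν d) := (hIe d).add (integrable_const A)
      have i2 : Integrable (fun ω => eps d ω + A + ∑ i, W ω i * B i) (ν d) := i1.add hSint
      have i3 : Integrable (fun ω => eps d ω + A + (∑ i, W ω i * B i) + C * lam d ω) (ν d) :=
        i2.add ((hIl d).const_mul C)
      rw [integral_add i3 hTint, integral_add i2 ((hIl d).const_mul C),
          integral_add i1 hSint, integral_add (hIe d) (integrable_const A),
          integral_const, ho1 d, integral_const_mul,
          integral_finset_sum _ (fun i _ => (hIWd d i).mul_const _),
          integral_finset_sum _ (fun i _ => (hIWl d i).const_mul _)] at h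
      simp only [integral_mul_const, integral_const_mul, hc1', measure_univ, probReal_univ,
        ENNReal.toReal_one, smul_eq_mul, one_mul, zero_add] at h
      rw [show (∑ i, ηc d i * E i) * m = ∑ i, ηc d i * (E i * m) by
        rw [Finset.sum_mul]; exact Finset.sum_congr rfl fun i _ => by ring]
      rw [show (∑ i, E i * B i) = ∑ i, (∫ ω, W ω i ∂ν d) * B i from rfl]
      linarith [h]
    -- equation from orthogonality to λ
    have e3 : A * m + (∑ i, E i * B i) * m + C * sq + (∑ i, ηc d i * E i) * sq = 0 := by
      have h := hn3 d
      rw [show (fun ω => (Y ω - (μt d + (∑ i, W ω i * τt d i) + ρt d * lam d ω)) * lam d ω)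
          = fun ω => eps d ω * lam d ω + A * lam d ω + (∑ i, B i * (W ω i * lam d ω))
            + C * lam d ω ^ 2 + ∑ i, ηc d i * (W ω i * lam d ω ^ 2) from funext pt3] at h
      have i1 : Integrable (fun ω => eps d ω * lam d ω + A * lam d ω) (ν d) :=
        (hIel d).add ((hIl d).const_mul A)
      have i2 : Integrable (fun ω => eps d ω * lam d ω + A * lam d ω
          + ∑ i, B i * (W ω i * lam d ω)) (ν d) := i1.add hS3int
      have i3 : Integrable (fun ω => eps d ω * lam d ω + A * lam d ω
          + (∑ i, B i * (W ω i * lam d ω)) + C * lam d ω ^ 2) (ν d) :=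
        i2.add ((hIl2 d).const_mul C)
      rw [integral_add i3 hT3int, integral_add i2 ((hIl2 d).const_mul C),
          integral_add i1 hS3int, integral_add (hIel d) ((hIl d).const_mul A),
          ho3 d,
          integral_finset_sum _ (fun i _ => (hIWl d i).const_mul _),
          integral_finset_sum _ (fun i _ => (hIWl2 d i).const_mul _)] at h
      simp only [integral_const_mul, hc1', hc3', zero_add] at h
      have hs1 : (∑ i, E i * B i) * m = ∑ i, B i * (E i * m) := by
        rw [Finset.sum_mul]; exact Finset.sum_congr rfl fun i _ => by ring
      have hs2 : (∑ i, ηc d i * E i) * sq = ∑ i, ηc d i * (E i * sq) := by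
        rw [Finset.sum_mul]; exact Finset.sum_congr rfl fun i _ => by ring
      rw [hs1, hs2]
      linarith [h]
    have hvar := hVar d
    rw [← hsq, ← hm] at hvar
    have hfac : (C + ∑ i, ηc d i * E i) * (sq - m ^ 2) = 0 := by
      linear_combination e3 - m * e1
    have hCK : C + (∑ i, ηc d i * E i) = 0 := by
      rcases mul_eq_zero.mp hfac with h | h
      · exact h
      · exact absurd h hvar
    have hint : (∫ ω, (∑ i, W ω i * ηc d i) ∂ν d) = ∑ i, ηc d i * E i := by
      rw [integral_finset_sum _ (fun i _ => (hIWd d i).mul_const _)]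
      exact Finset.sum_congr rfl fun i _ => by
        rw [integral_mul_const]; simp only [hE]; ring
    rw [hint]
    have : C = ρc d - ρt d := hC
    linarith [hCK]
  refine ⟨key, ?_⟩
  -- Part 2: law of total expectation and algebra
  have hmeas : MeasurableSet {ω | D ω = true} := hD (measurableSet_singleton true)
  have hcompl : {ω | D ω = false} = {ω | D ω = true}ᶜ := by
    ext ω; simp
  have hne : ∀ d : Bool, (μpr {ω | D ω = d}).toReal ≠ 0 := by
    intro d
    exact ENNReal.toReal_ne_zero.mpr ⟨(hpos d).ne', measure_ne_top _ _⟩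
  have hsum : (μpr {ω | D ω = true}).toReal + (μpr {ω | D ω = false}).toReal = 1 := by
    rw [← ENNReal.toReal_add (measure_ne_top _ _) (measure_ne_top _ _), hcompl,
      measure_add_measure_compl hmeas, measure_univ, ENNReal.toReal_one]
  have hrt : ∀ (d : Bool) (f : Ω → ℝ),
      (μpr {ω | D ω = d}).toReal * (∫ ω, f ω ∂ν d) = ∫ ω in {ω | D ω = d}, f ω ∂μpr := by
    intro d f
    have hcond : ν d = (μpr {ω | D ω = d})⁻¹ • μpr.restrict {ω | D ω = d} := by
      rw [hν]; rfl
    rw [hcond, integral_smul_measure, ENNReal.toReal_inv, smul_eq_mul, ← mul_assoc,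
      mul_inv_cancel₀ (hne d), one_mul]
  have htot : ∀ i, ∫ ω, W ω i ∂μpr
      = (μpr {ω | D ω = true}).toReal * (∫ ω, W ω i ∂ν true)
        + (μpr {ω | D ω = false}).toReal * (∫ ω, W ω i ∂ν false) := by
    intro i
    rw [hrt true, hrt false, hcompl]
    exact (integral_add_compl hmeas (hIW i)).symm
  have hEint : ∀ d, (∫ ω, (∑ i, W ω i * ηc d i) ∂ν d)
      = ∑ i, (∫ ω, W ω i ∂ν d) * ηc d i := by
    intro d
    rw [integral_finset_sum _ (fun i _ => (hIWd d i).mul_const _)]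
    exact Finset.sum_congr rfl fun i _ => integral_mul_const _ _
  have hμint : (∫ ω, (∑ i, W ω i * (ηc true i - ηc false i)) ∂μpr)
      = ∑ i, (∫ ω, W ω i ∂μpr) * (ηc true i - ηc false i) := by
    rw [integral_finset_sum _ (fun i _ => (hIW i).mul_const _)]
    exact Finset.sum_congr rfl fun i _ => integral_mul_const _ _
  rw [key true, key false, hEint true, hEint false, hμint]
  simp_rw [htot]
  have step : ∀ x y S1 S0 S2 S4 : ℝ, S1 - S0 - S2 = S4 →
      (x + S1 - (y + S0)) - (x - y + S2) = S4 := by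
    intros; linarith
  apply step
  rw [← Finset.sum_sub_distrib, ← Finset.sum_sub_distrib]
  refine Finset.sum_congr rfl fun i _ => ?_
  linear_combination ((∫ ω, W ω i ∂ν false) * ηc false i
    - (∫ ω, W ω i ∂ν true) * ηc true i) * hsum
end

section
/- Under the same model and Assumptions as above (uncorrelatedness of $W$ with $\lambda_d(P)$ up to second moments within each treatment arm), if additionally $E[W\mid D=1] = E[W\mid D=0]$, then the misspecified-regression estimands satisfy $\tilde\mu_1 - \tilde\mu_0 + E[W]'(\tilde\tau_1 - \tilde\tau_0) = \mu_1 - \mu_0 + E[W]'(\tau_1 - \tau_0)$, i.e. the ATE estimand under (misspecified) additive separability is unbiased. -/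
open MeasureTheory ProbabilityTheory

/-- Under the same model and uncorrelatedness assumptions, if additionally the
covariates are balanced across treatment arms (`E[W∣D=1] = E[W∣D=0]`), then the ATE
estimand of the misspecified (additively separable) regressions is unbiased:
`μ̃₁ - μ̃₀ + E[W]'(τ̃₁ - τ̃₀) = μ₁ - μ₀ + E[W]'(τ₁ - τ₀)`. -/
theorem additive_separability_ate_unbiased {Ω : Type*} [MeasurableSpace Ω]
    (μpr : Measure Ω) [IsProbabilityMeasure μpr] (L : ℕ)
    (D : Ω → Bool) (hD : Measurable D)
    (hpos : ∀ d : Bool, 0 < μpr {ω | D ω = d})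
    (W : Ω → Fin L → ℝ) (Y : Ω → ℝ) (lam : Bool → Ω → ℝ)
    (μc ρc : Bool → ℝ) (τc ηc : Bool → Fin L → ℝ)
    (μt ρt : Bool → ℝ) (τt : Bool → Fin L → ℝ)
    (ν : Bool → Measure Ω) (hν : ∀ d, ν d = μpr[|{ω | D ω = d}])
    (eps : Bool → Ω → ℝ)
    (heps : ∀ d ω, eps d ω =
      Y ω - (μc d + (∑ i, W ω i * τc d i) + (ρc d + ∑ i, W ω i * ηc d i) * lam d ω))
    -- structural error orthogonal to the regressors within each arm
    (ho1 : ∀ d, (∫ ω, eps d ω ∂ν d) = 0)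
    (ho2 : ∀ d i, (∫ ω, eps d ω * W ω i ∂ν d) = 0)
    (ho3 : ∀ d, (∫ ω, eps d ω * lam d ω ∂ν d) = 0)
    (ho4 : ∀ d i, (∫ ω, eps d ω * W ω i * lam d ω ∂ν d) = 0)
    -- normal equations of the (misspecified) population OLS of Y on (1, W, λ_d) in arm d
    (hn1 : ∀ d, (∫ ω, (Y ω - (μt d + (∑ i, W ω i * τt d i) + ρt d * lam d ω)) ∂ν d) = 0)
    (hn2 : ∀ d i,
      (∫ ω, (Y ω - (μt d + (∑ i, W ω i * τt d i) + ρt d * lam d ω)) * W ω i ∂ν d) = 0)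
    (hn3 : ∀ d,
      (∫ ω, (Y ω - (μt d + (∑ i, W ω i * τt d i) + ρt d * lam d ω)) * lam d ω ∂ν d) = 0)
    -- W uncorrelated with λ_d(P) up to second moments within each arm
    (hc1 : ∀ d i, (∫ ω, W ω i * lam d ω ∂ν d) -
      (∫ ω, W ω i ∂ν d) * ∫ ω, lam d ω ∂ν d = 0)
    (hc2 : ∀ d i j, (∫ ω, W ω i * W ω j * lam d ω ∂ν d) -
      (∫ ω, W ω i * W ω j ∂ν d) * ∫ ω, lam d ω ∂ν d = 0)
    (hc3 : ∀ d i, (∫ ω, W ω i * lam d ω ^ 2 ∂ν d) -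
      (∫ ω, W ω i ∂ν d) * ∫ ω, lam d ω ^ 2 ∂ν d = 0)
    -- existence of the relevant moments
    (hIW : ∀ i, Integrable (fun ω => W ω i) μpr)
    (hIWd : ∀ d i, Integrable (fun ω => W ω i) (ν d))
    (hIl : ∀ d, Integrable (lam d) (ν d))
    (hIWW : ∀ d i j, Integrable (fun ω => W ω i * W ω j) (ν d))
    (hIWl : ∀ d i, Integrable (fun ω => W ω i * lam d ω) (ν d))
    (hIl2 : ∀ d, Integrable (fun ω => lam d ω ^ 2) (ν d))
    (hIWl2 : ∀ d i, Integrable (fun ω => W ω i * lam d ω ^ 2) (ν d))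
    (hIWWl : ∀ d i j, Integrable (fun ω => W ω i * W ω j * lam d ω) (ν d))
    (hIe : ∀ d, Integrable (eps d) (ν d))
    (hIeW : ∀ d i, Integrable (fun ω => eps d ω * W ω i) (ν d))
    (hIel : ∀ d, Integrable (fun ω => eps d ω * lam d ω) (ν d))
    (hIeWl : ∀ d i, Integrable (fun ω => eps d ω * W ω i * lam d ω) (ν d))
    -- non-collinearity of the regressors within each arm
    (G : Bool → Matrix (Fin (L + 1)) (Fin (L + 1)) ℝ)
    (hG : ∀ d, G d = Matrix.of fun i j =>
      ∫ ω, (Fin.cons 1 (W ω) : Fin (L + 1) → ℝ) i * (Fin.cons 1 (W ω) : Fin (L + 1) → ℝ) j ∂ν d)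
    (hGinv : ∀ d, IsUnit (G d).det)
    (hVar : ∀ d, (∫ ω, lam d ω ^ 2 ∂ν d) - (∫ ω, lam d ω ∂ν d) ^ 2 ≠ 0)
    -- balance of covariates across treatment arms
    (hbal : ∀ i, (∫ ω, W ω i ∂ν true) = ∫ ω, W ω i ∂ν false) :
    μt true - μt false + ∑ i, (∫ ω, W ω i ∂μpr) * (τt true i - τt false i) =
      μc true - μc false + ∑ i, (∫ ω, W ω i ∂μpr) * (τc true i - τc false i) := by
  classical
  -- probability measure instance on each arm
  have hprob : ∀ d : Bool, IsProbabilityMeasure (ν d) := by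
    intro d
    rw [hν]
    exact ProbabilityTheory.cond_isProbabilityMeasure (hpos d).ne'
  -- per-arm key identity
  have key : ∀ d : Bool,
      μt d + ∑ i, (∫ ω, W ω i ∂ν d) * τt d i
        = μc d + ∑ i, (∫ ω, W ω i ∂ν d) * τc d i := by
    intro d
    haveI := hprob d
    set m : Fin L → ℝ := fun i => ∫ ω, W ω i ∂ν d with hm
    set lbar : ℝ := ∫ ω, lam d ω ∂ν d with hlbar
    set l2 : ℝ := ∫ ω, lam d ω ^ 2 ∂ν d with hl2
    have hWl : ∀ i, (∫ ω, W ω i * lam d ω ∂ν d) = m i * lbar := fun i =>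
      sub_eq_zero.mp (hc1 d i)
    have hWl2 : ∀ i, (∫ ω, W ω i * lam d ω ^ 2 ∂ν d) = m i * l2 := fun i =>
      sub_eq_zero.mp (hc3 d i)
    -- integrability of the pieces
    have I_S : Integrable (fun ω => ∑ i, W ω i * (τc d i - τt d i)) (ν d) :=
      integrable_finset_sum _ fun i _ => (hIWd d i).mul_const _
    have I_cl : Integrable (fun ω => (ρc d - ρt d) * lam d ω) (ν d) :=
      (hIl d).const_mul _
    have I_T : Integrable (fun ω => ∑ i, W ω i * ηc d i * lam d ω) (ν d) := by
      refine integrable_finset_sum _ fun i _ => ?_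
      have h : (fun ω => W ω i * ηc d i * lam d ω)
          = fun ω => (W ω i * lam d ω) * ηc d i := by funext ω; ring
      rw [h]; exact (hIWl d i).mul_const _
    -- E1 : first normal equation, substituting the true model
    have exp1 : (fun ω => Y ω - (μt d + (∑ i, W ω i * τt d i) + ρt d * lam d ω))
        = fun ω => (μc d - μt d) + ((∑ i, W ω i * (τc d i - τt d i)) +
            (((ρc d - ρt d) * lam d ω) +
              ((∑ i, W ω i * ηc d i * lam d ω) + eps d ω))) := by
      funext ω
      simp only [mul_sub, Finset.sum_sub_distrib, ← Finset.sum_mul]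
      linear_combination -heps d ω
    have I4 : Integrable (fun ω => (∑ i, W ω i * ηc d i * lam d ω) + eps d ω) (ν d) := by
      exact I_T.add (hIe d)
    have I3 : Integrable (fun ω => ((ρc d - ρt d) * lam d ω) +
        ((∑ i, W ω i * ηc d i * lam d ω) + eps d ω)) (ν d) := by exact I_cl.add I4
    have I2 : Integrable (fun ω => (∑ i, W ω i * (τc d i - τt d i)) +
        (((ρc d - ρt d) * lam d ω) + ((∑ i, W ω i * ηc d i * lam d ω) + eps d ω))) (ν d) := by
      exact I_S.add I3
    have hn1d := hn1 d
    rw [exp1, integral_add (integrable_const _) I2,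
      integral_add I_S I3,
      integral_add I_cl I4,
      integral_add I_T (hIe d), ho1 d, integral_const,
      integral_finset_sum _ (fun i _ => (hIWd d i).mul_const _),
      integral_finset_sum _ (fun i _ => by
        have h : (fun ω => W ω i * ηc d i * lam d ω)
            = fun ω => (W ω i * lam d ω) * ηc d i := by funext ω; ring
        rw [h]; exact (hIWl d i).mul_const _)] at hn1d
    simp only [measure_univ, probReal_univ, ENNReal.toReal_one, smul_eq_mul, one_mul,
      integral_mul_const, integral_const_mul, add_zero] at hn1d
    -- rewrite the remaining integrals in hn1d
    have hn1' : (μc d - μt d) + ((∑ i, m i * (τc d i - τt d i)) +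
        (((ρc d - ρt d) * lbar) + (∑ i, (m i * lbar) * ηc d i))) = 0 := by
      rw [← hn1d]
      congr 2
      congr 1
      refine Finset.sum_congr rfl fun i _ => ?_
      have h : (fun ω => W ω i * ηc d i * lam d ω)
          = fun ω => (W ω i * lam d ω) * ηc d i := by funext ω; ring
      rw [h, integral_mul_const, hWl]
    -- E3 : third normal equation, substituting the true model
    have I_Sl : Integrable (fun ω => ∑ i, (W ω i * lam d ω) * (τc d i - τt d i)) (ν d) :=
      integrable_finset_sum _ fun i _ => (hIWl d i).mul_const _
    have I_cl2 : Integrable (fun ω => (ρc d - ρt d) * lam d ω ^ 2) (ν d) :=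
      (hIl2 d).const_mul _
    have I_Tl : Integrable (fun ω => ∑ i, (W ω i * lam d ω ^ 2) * ηc d i) (ν d) :=
      integrable_finset_sum _ fun i _ => (hIWl2 d i).mul_const _
    have hswapA : ∀ ω, ∑ i, (W ω i * lam d ω) * (τc d i - τt d i)
        = (∑ i, W ω i * (τc d i - τt d i)) * lam d ω := fun ω => by
      rw [Finset.sum_mul]; exact Finset.sum_congr rfl fun i _ => by ring
    have hswapB : ∀ ω, ∑ i, (W ω i * lam d ω ^ 2) * ηc d i
        = (∑ i, W ω i * ηc d i) * lam d ω ^ 2 := fun ω => by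
      rw [Finset.sum_mul]; exact Finset.sum_congr rfl fun i _ => by ring
    have exp3 : (fun ω => (Y ω - (μt d + (∑ i, W ω i * τt d i) + ρt d * lam d ω)) * lam d ω)
        = fun ω => (μc d - μt d) * lam d ω + ((∑ i, (W ω i * lam d ω) * (τc d i - τt d i)) +
            (((ρc d - ρt d) * lam d ω ^ 2) +
              ((∑ i, (W ω i * lam d ω ^ 2) * ηc d i) + eps d ω * lam d ω))) := by
      funext ω
      rw [hswapA ω, hswapB ω]
      simp only [mul_sub, sub_mul, Finset.sum_sub_distrib, ← Finset.sum_mul]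
      linear_combination (-lam d ω) * heps d ω
    have J4 : Integrable (fun ω => (∑ i, (W ω i * lam d ω ^ 2) * ηc d i) + eps d ω * lam d ω)
        (ν d) := by exact I_Tl.add (hIel d)
    have J3 : Integrable (fun ω => ((ρc d - ρt d) * lam d ω ^ 2) +
        ((∑ i, (W ω i * lam d ω ^ 2) * ηc d i) + eps d ω * lam d ω)) (ν d) := by
      exact I_cl2.add J4
    have J2 : Integrable (fun ω => (∑ i, (W ω i * lam d ω) * (τc d i - τt d i)) +
        (((ρc d - ρt d) * lam d ω ^ 2) +
          ((∑ i, (W ω i * lam d ω ^ 2) * ηc d i) + eps d ω * lam d ω))) (ν d) := by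
      exact I_Sl.add J3
    have hn3d := hn3 d
    rw [exp3, integral_add ((hIl d).const_mul _) J2,
      integral_add I_Sl J3,
      integral_add I_cl2 J4,
      integral_add I_Tl (hIel d), ho3 d,
      integral_finset_sum _ (fun i _ => (hIWl d i).mul_const _),
      integral_finset_sum _ (fun i _ => (hIWl2 d i).mul_const _)] at hn3d
    simp only [integral_mul_const, integral_const_mul, add_zero] at hn3d
    have hn3' : (μc d - μt d) * lbar + ((∑ i, (m i * lbar) * (τc d i - τt d i)) +
        (((ρc d - ρt d) * l2) + (∑ i, (m i * l2) * ηc d i))) = 0 := by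
      rw [← hn3d]
      congr 1
      congr 1
      · exact Finset.sum_congr rfl fun i _ => by rw [hWl]
      congr 1
      exact Finset.sum_congr rfl fun i _ => by rw [hWl2]
    -- abbreviations
    set a : ℝ := μc d - μt d with ha
    set c : ℝ := ρc d - ρt d with hc
    set B : ℝ := ∑ i, m i * (τc d i - τt d i) with hB
    set S : ℝ := ∑ i, m i * ηc d i with hS
    have hsum1 : ∑ i, (m i * lbar) * ηc d i = S * lbar := by
      rw [hS, Finset.sum_mul]; exact Finset.sum_congr rfl fun i _ => by ring
    have hsum2 : ∑ i, (m i * l2) * ηc d i = S * l2 := by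
      rw [hS, Finset.sum_mul]; exact Finset.sum_congr rfl fun i _ => by ring
    have hsum3 : ∑ i, (m i * lbar) * (τc d i - τt d i) = B * lbar := by
      rw [hB, Finset.sum_mul]; exact Finset.sum_congr rfl fun i _ => by ring
    rw [hsum1] at hn1'
    rw [hsum2, hsum3] at hn3'
    -- solve: (c + S) * (l2 - lbar^2) = 0
    have hk : (c + S) * (l2 - lbar ^ 2) = 0 := by
      linear_combination hn3' - lbar * hn1'
    have hcS : c + S = 0 := by
      rcases mul_eq_zero.mp hk with h | h
      · exact h
      · exact absurd h (hVar d)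
    have hab : a + B = 0 := by linear_combination hn1' - lbar * hcS
    -- conclude
    have hBsplit : B = ∑ i, m i * τc d i - ∑ i, m i * τt d i := by
      rw [hB]; simp [mul_sub, Finset.sum_sub_distrib]
    rw [hBsplit, ha] at hab
    simp only [hm] at hab
    linarith
  -- law of total expectation: E[W] = E[W | D = d]
  have hEW : ∀ i, (∫ ω, W ω i ∂μpr) = ∫ ω, W ω i ∂ν true := by
    intro i
    have hst : MeasurableSet {ω | D ω = true} := hD (measurableSet_singleton true)
    have hcompl : {ω | D ω = true}ᶜ = {ω | D ω = false} := by
      ext ω; simp [Bool.not_eq_true]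
    have hrestr : ∀ d : Bool, ∫ ω in {ω | D ω = d}, W ω i ∂μpr
        = (μpr {ω | D ω = d}).toReal * ∫ ω, W ω i ∂ν d := by
      intro d
      rw [hν, ProbabilityTheory.cond, integral_smul_measure, smul_eq_mul,
        ENNReal.toReal_inv, ← mul_assoc, mul_inv_cancel₀, one_mul]
      exact ENNReal.toReal_ne_zero.mpr ⟨(hpos d).ne', measure_ne_top _ _⟩
    have htot := integral_add_compl hst (hIW i)
    rw [hcompl, hrestr true, hrestr false, ← hbal i] at htot
    have hmeas : (μpr {ω | D ω = true}).toReal + (μpr {ω | D ω = false}).toReal = 1 := by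
      have h1 : μpr {ω | D ω = true} + μpr {ω | D ω = false} = 1 := by
        rw [← hcompl]
        rw [measure_add_measure_compl hst, measure_univ]
      have h2 := ENNReal.toReal_add (a := μpr {ω | D ω = true})
        (b := μpr {ω | D ω = false}) (measure_ne_top _ _) (measure_ne_top _ _)
      rw [h1] at h2
      simpa using h2.symm
    rw [← htot, ← add_mul, hmeas, one_mul]
  have hEW' : ∀ i, (∫ ω, W ω i ∂μpr) = ∫ ω, W ω i ∂ν false := fun i => by
    rw [hEW i, hbal i]
  have k1 := key true
  have k0 := key false
  simp only [← hEW] at k1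
  simp only [← hEW'] at k0
  have hsplit : ∀ (f g : Fin L → ℝ),
      ∑ i, (∫ ω, W ω i ∂μpr) * (f i - g i)
        = ∑ i, (∫ ω, W ω i ∂μpr) * f i - ∑ i, (∫ ω, W ω i ∂μpr) * g i := by
    intro f g; simp [mul_sub, Finset.sum_sub_distrib]
  rw [hsplit, hsplit]
  linarith
end
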